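/- Define for $h, k \in \mathbb{Z}^2$ with $h \neq 0$, $k \neq 0$, $h \neq k$: $c_{h,k} = -\frac{1}{4\pi} \frac{h^\perp \cdot k}{|h| |k-h|} \left[ |k| - 2\frac{h \cdot k}{|k|} \right]$, where $h^\perp = (-h_2, h_1)$. Then $c_{h,k} = c_{k-h,k}$. -/

import Mathlib

noncomputable def znorm (k : ℤ × ℤ) : ℝ := Real.sqrt ((k.1 : ℝ)^2 + (k.2 : ℝ)^2)

/-- The Fourier coefficient of the 2D Navier–Stokes nonlinearity. -/
noncomputable def nsCoeff (h k : ℤ × ℤ) : ℝ :=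
  -(1 / (4 * Real.pi)) *
    (((-h.2 : ℝ) * k.1 + (h.1 : ℝ) * k.2) / (znorm h * znorm (k - h))) *
    (znorm k - 2 * ((h.1 : ℝ) * k.1 + (h.2 : ℝ) * k.2) / znorm k)

/-!
Replacing `h` by `k - h` fixes the denominator `|h| |k - h|` and flips the sign of both remaining
factors: `(k - h)^⊥ · k = -h^⊥ · k`, and, since `(k - h) · k = |k|² - h · k`,
`|k| - 2 (k - h) · k / |k| = -(|k| - 2 h · k / |k|)`.
-/

noncomputable def zdot (h k : ℤ × ℤ) : ℝ := (h.1 : ℝ) * k.1 + (h.2 : ℝ) * k.2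

/-- `h^⊥ · k` with `h^⊥ = (-h₂, h₁)`. -/
noncomputable def zperpDot (h k : ℤ × ℤ) : ℝ := (-h.2 : ℝ) * k.1 + (h.1 : ℝ) * k.2

theorem znorm_sq (k : ℤ × ℤ) : znorm k ^ 2 = zdot k k := by
  rw [znorm, Real.sq_sqrt (by positivity), zdot]
  ring

theorem zdot_sub_left (h k : ℤ × ℤ) : zdot (k - h) k = znorm k ^ 2 - zdot h k := by
  rw [znorm_sq, zdot, zdot, zdot, Prod.fst_sub, Prod.snd_sub]
  push_cast
  ring

theorem zperpDot_sub_left (h k : ℤ × ℤ) : zperpDot (k - h) k = -zperpDot h k := by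
  rw [zperpDot, zperpDot, Prod.fst_sub, Prod.snd_sub]
  push_cast
  ring

/-- The junk value `0 / 0 = 0` makes this hold also at `k = 0`. -/
theorem znorm_sub_two_mul_zdot_sub_left_div (h k : ℤ × ℤ) :
    znorm k - 2 * zdot (k - h) k / znorm k = -(znorm k - 2 * zdot h k / znorm k) := by
  rw [zdot_sub_left, sq, mul_sub, sub_div, mul_div_assoc, mul_self_div_self]
  ring

theorem nsCoeff_eq (h k : ℤ × ℤ) :
    nsCoeff h k = -(1 / (4 * Real.pi)) * (zperpDot h k / (znorm h * znorm (k - h))) *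
      (znorm k - 2 * zdot h k / znorm k) :=
  rfl

theorem nsCoeff_symm_general (h k : ℤ × ℤ) :
    nsCoeff h k = nsCoeff (k - h) k := by
  rw [nsCoeff_eq, nsCoeff_eq, sub_sub_cancel, zperpDot_sub_left,
    znorm_sub_two_mul_zdot_sub_left_div, mul_comm (znorm (k - h))]
  ring

/-- the symmetry `c_{h,k} = c_{k-h,k}`. -/
theorem nsCoeff_symm (h k : ℤ × ℤ) (hh : h ≠ 0) (hk : k ≠ 0) (hhk : h ≠ k) :
    nsCoeff h k = nsCoeff (k - h) k :=
  nsCoeff_symm_general h k
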